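/- arXiv:0706.1502 — 2 statements merged into one kernel-verified Lean document; each statement's English description precedes it below -/
import Mathlib

section
/- Let φ be a multiplicative bijective map from the triangular algebra T = Tri(A,M,B) onto an arbitrary ring R', where A satisfies (i) and B satisfies (ii). Then for any a11 ∈ T11 and b12 ∈ T12, φ(a11 + b12) = φ(a11) + φ(b12). -/
/-- The triangular algebra `Tri(A, M, B)`: formal matrices `[[a, m], [0, b]]` with
`a ∈ A`, `m ∈ M`, `b ∈ B`, under the usual matrix operations. -/
@[ext]
structure Tri (A M B : Type*) where
  a : A
  m : M
  b : B

namespace Tri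

variable {A M B : Type*}

section AddGroup

variable [AddCommGroup A] [AddCommGroup M] [AddCommGroup B]

instance : Add (Tri A M B) := ⟨fun x y => ⟨x.a + y.a, x.m + y.m, x.b + y.b⟩⟩
instance : Zero (Tri A M B) := ⟨⟨0, 0, 0⟩⟩
instance : Neg (Tri A M B) := ⟨fun x => ⟨-x.a, -x.m, -x.b⟩⟩

@[simp] theorem add_a (x y : Tri A M B) : (x + y).a = x.a + y.a := rfl
@[simp] theorem add_m (x y : Tri A M B) : (x + y).m = x.m + y.m := rfl
@[simp] theorem add_b (x y : Tri A M B) : (x + y).b = x.b + y.b := rfl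
@[simp] theorem zero_a : (0 : Tri A M B).a = 0 := rfl
@[simp] theorem zero_m : (0 : Tri A M B).m = 0 := rfl
@[simp] theorem zero_b : (0 : Tri A M B).b = 0 := rfl
@[simp] theorem neg_a (x : Tri A M B) : (-x).a = -x.a := rfl
@[simp] theorem neg_m (x : Tri A M B) : (-x).m = -x.m := rfl
@[simp] theorem neg_b (x : Tri A M B) : (-x).b = -x.b := rfl

instance : AddCommGroup (Tri A M B) where
  add_assoc x y z := by ext <;> simp [add_assoc]
  zero_add x := by ext <;> simp
  add_zero x := by ext <;> simp
  nsmul := nsmulRec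
  zsmul := zsmulRec
  neg_add_cancel x := by ext <;> simp
  add_comm x y := by ext <;> simp [add_comm]

end AddGroup

section Mul

variable [NonUnitalRing A] [NonUnitalRing B] [AddCommGroup M]
  [SMul A M] [SMul Bᵐᵒᵖ M]

/-- Multiplication of formal upper-triangular matrices:
`[[a, m], [0, b]] * [[a', m'], [0, b']] = [[a * a', a • m' + m • b'], [0, b * b']]`,
where `m • b'` is the right action of `B`, encoded via `Bᵐᵒᵖ`. -/
instance : Mul (Tri A M B) :=
  ⟨fun x y => ⟨x.a * y.a, x.a • y.m + MulOpposite.op y.b • x.m, x.b * y.b⟩⟩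

end Mul

/-- The embedding of `A` as the corner `T₁₁` of the triangular algebra. -/
def e11 [Zero M] [Zero B] (a : A) : Tri A M B := ⟨a, 0, 0⟩

/-- The embedding of `M` as the corner `T₁₂` of the triangular algebra. -/
def e12 [Zero A] [Zero B] (m : M) : Tri A M B := ⟨0, m, 0⟩

/-- The embedding of `B` as the corner `T₂₂` of the triangular algebra. -/
def e22 [Zero A] [Zero M] (b : B) : Tri A M B := ⟨0, 0, b⟩

end Tri

/-- `M` is an `(A, B)`-bimodule (left `A`-action, right `B`-action encoded via `Bᵐᵒᵖ`)
compatible with the `R`-module structures, where `A` and `B` are (possibly non-unital)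
algebras over the commutative ring `R`. -/
class TriBimodule (R A M B : Type*) [CommRing R]
    [NonUnitalRing A] [NonUnitalRing B] [AddCommGroup M]
    [Module R A] [Module R B] [Module R M]
    [SMul A M] [SMul Bᵐᵒᵖ M] : Prop where
  smul_add_left : ∀ (a : A) (m m' : M), a • (m + m') = a • m + a • m'
  add_smul_left : ∀ (a a' : A) (m : M), (a + a') • m = a • m + a' • m
  mul_smul_left : ∀ (a a' : A) (m : M), (a * a') • m = a • (a' • m)
  smul_add_right : ∀ (b : Bᵐᵒᵖ) (m m' : M), b • (m + m') = b • m + b • m'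
  add_smul_right : ∀ (b b' : Bᵐᵒᵖ) (m : M), (b + b') • m = b • m + b' • m
  mul_smul_right : ∀ (b b' : Bᵐᵒᵖ) (m : M), (b * b') • m = b • (b' • m)
  smul_smul_comm : ∀ (a : A) (b : Bᵐᵒᵖ) (m : M), a • (b • m) = b • (a • m)
  rsmul_smul_left : ∀ (r : R) (a : A) (m : M), (r • a) • m = r • (a • m)
  rsmul_smul_right : ∀ (r : R) (b : Bᵐᵒᵖ) (m : M), (r • b) • m = r • (b • m)



section AuxMul
variable {A M B : Type*} [NonUnitalRing A] [NonUnitalRing B] [AddCommGroup M]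
  [SMul A M] [SMul Bᵐᵒᵖ M]

theorem Tri.mul_a' (x y : Tri A M B) : (x * y).a = x.a * y.a := rfl
theorem Tri.mul_m' (x y : Tri A M B) :
    (x * y).m = x.a • y.m + MulOpposite.op y.b • x.m := rfl
theorem Tri.mul_b' (x y : Tri A M B) : (x * y).b = x.b * y.b := rfl

end AuxMul

theorem mult_add_e11_e12
    {R A M B R' : Type*} [CommRing R]
    [NonUnitalRing A] [NonUnitalRing B] [AddCommGroup M]
    [Module R A] [Module R B] [Module R M]
    [SMulCommClass R A A] [IsScalarTower R A A]
    [SMulCommClass R B B] [IsScalarTower R B B]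
    [SMul A M] [SMul Bᵐᵒᵖ M] [TriBimodule R A M B]
    (hfaithA : ∀ a : A, (∀ m : M, a • m = 0) → a = 0)
    (hfaithB : ∀ b : B, (∀ m : M, MulOpposite.op b • m = 0) → b = 0)
    (hA₁ : ∀ a : A, (∀ x : A, a * x = 0) → a = 0)
    (hA₂ : ∀ a : A, (∀ x : A, x * a = 0) → a = 0)
    (hB₁ : ∀ b : B, (∀ y : B, b * y = 0) → b = 0)
    (hB₂ : ∀ b : B, (∀ y : B, y * b = 0) → b = 0)
    [Ring R'] (φ : Tri A M B → R')
    (hbij : Function.Bijective φ)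
    (hmul : ∀ x y : Tri A M B, φ (x * y) = φ x * φ y) :
    ∀ (a : A) (m : M), φ ((Tri.e11 a : Tri A M B) + Tri.e12 m) = φ (Tri.e11 a) + φ (Tri.e12 m) := by
  obtain ⟨hinj, hsurj⟩ := hbij
  -- basic smul lemmas
  have hA0 : ∀ c : A, c • (0 : M) = 0 := by
    intro c
    have h := TriBimodule.smul_add_left (R := R) (B := B) c (0 : M) 0
    rw [add_zero] at h
    exact left_eq_add.mp h
  have zsA : ∀ n : M, (0 : A) • n = 0 := by
    intro n
    have h := TriBimodule.add_smul_left (R := R) (B := B) (0 : A) 0 n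
    rw [add_zero] at h
    exact left_eq_add.mp h
  have hB0 : ∀ d : Bᵐᵒᵖ, d • (0 : M) = 0 := by
    intro d
    have h := TriBimodule.smul_add_right (R := R) (A := A) d (0 : M) 0
    rw [add_zero] at h
    exact left_eq_add.mp h
  have zsB : ∀ n : M, (0 : Bᵐᵒᵖ) • n = 0 := by
    intro n
    have h := TriBimodule.add_smul_right (R := R) (A := A) (0 : Bᵐᵒᵖ) 0 n
    rw [add_zero] at h
    exact left_eq_add.mp h
  have hnegA : ∀ (c : A) (n : M), (-c) • n = -(c • n) := by
    intro c n
    have h := TriBimodule.add_smul_left (R := R) (B := B) c (-c) n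
    rw [add_neg_cancel, zsA] at h
    exact (neg_eq_of_add_eq_zero_right h.symm).symm
  -- φ 0 = 0
  obtain ⟨y, hy⟩ := hsurj 0
  have h0 : φ 0 = 0 := by
    have hz : (0 : Tri A M B) * y = 0 := by
      ext <;> simp [Tri.mul_a', Tri.mul_m', Tri.mul_b', zsA, hB0]
    calc φ 0 = φ (0 * y) := by rw [hz]
      _ = φ 0 * φ y := hmul _ _
      _ = 0 := by rw [hy, mul_zero]
  -- the preimage of 1 is a two-sided identity
  obtain ⟨e, he⟩ := hsurj 1
  have hre : ∀ x : Tri A M B, x * e = x := fun x => hinj (by rw [hmul, he, mul_one])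
  have heb : ∀ n : M, MulOpposite.op e.b • n = n := by
    intro n
    have h := congrArg Tri.m (hre (Tri.e12 n))
    simpa [Tri.e12, Tri.mul_m', zsA] using h
  have hbe : ∀ b : B, b * e.b = b := by
    intro b
    have h := congrArg Tri.b (hre (Tri.e22 b))
    simpa [Tri.e22, Tri.mul_b'] using h
  -- main argument
  intro a m
  obtain ⟨s, hs⟩ := hsurj (φ (Tri.e11 a) + φ (Tri.e12 m))
  have h1 : s * Tri.e22 e.b = Tri.e12 m := by
    apply hinj
    have c1 : (Tri.e11 a : Tri A M B) * Tri.e22 e.b = 0 := by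
      ext <;> simp [Tri.e11, Tri.e22, Tri.mul_a', Tri.mul_m', Tri.mul_b', hA0, hB0]
    have c2 : (Tri.e12 m : Tri A M B) * Tri.e22 e.b = Tri.e12 m := by
      ext <;> simp [Tri.e12, Tri.e22, Tri.mul_a', Tri.mul_m', Tri.mul_b', zsA, heb]
    rw [hmul, hs, add_mul, ← hmul, ← hmul, c1, c2, h0, zero_add]
  have hb : s.b = 0 := by
    have h := congrArg Tri.b h1
    simp only [Tri.mul_b', Tri.e22, Tri.e12] at h
    rw [hbe] at h
    exact h
  have hm : s.m = m := by
    have h := congrArg Tri.m h1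
    simpa [Tri.mul_m', Tri.e22, Tri.e12, hA0, heb] using h
  have ha : s.a = a := by
    have key : ∀ n : M, s.a • n = a • n := by
      intro n
      have h2 : s * Tri.e12 n = Tri.e12 (a • n) := by
        apply hinj
        have c1 : (Tri.e11 a : Tri A M B) * Tri.e12 n = Tri.e12 (a • n) := by
          ext <;> simp [Tri.e11, Tri.e12, Tri.mul_a', Tri.mul_m', Tri.mul_b', zsB]
        have c2 : (Tri.e12 m : Tri A M B) * Tri.e12 n = 0 := by
          ext <;> simp [Tri.e12, Tri.mul_a', Tri.mul_m', Tri.mul_b', zsA, zsB]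
        rw [hmul, hs, add_mul, ← hmul, ← hmul, c1, c2, h0, add_zero]
      have h := congrArg Tri.m h2
      simpa [Tri.mul_m', Tri.e12, zsB] using h
    have hz : ∀ n : M, (s.a - a) • n = 0 := by
      intro n
      have hadd := TriBimodule.add_smul_left (R := R) (B := B) s.a (-a) n
      rw [hnegA, key] at hadd
      rw [sub_eq_add_neg, hadd, add_neg_cancel]
    exact sub_eq_zero.mp (hfaithA (s.a - a) hz)
  have hfin : Tri.e11 a + Tri.e12 m = s := by
    ext <;> simp [Tri.e11, Tri.e12, ha, hm, hb]
  rw [hfin, hs]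
end

section
/- Let φ be a multiplicative bijective map from the triangular algebra T = Tri(A,M,B) onto an arbitrary ring R', where A satisfies (i) and B satisfies (ii). Then for any a22 ∈ T22 and b12 ∈ T12, φ(a22 + b12) = φ(a22) + φ(b12). -/
namespace Tri

section MulLemmas

variable {A M B : Type*} [NonUnitalRing A] [NonUnitalRing B] [AddCommGroup M]
  [SMul A M] [SMul Bᵐᵒᵖ M]

@[simp] theorem mul_a (x y : Tri A M B) : (x * y).a = x.a * y.a := rfl
@[simp] theorem mul_m (x y : Tri A M B) :
    (x * y).m = x.a • y.m + MulOpposite.op y.b • x.m := rfl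
@[simp] theorem mul_b (x y : Tri A M B) : (x * y).b = x.b * y.b := rfl

end MulLemmas

@[simp] theorem e11_a [Zero M] [Zero B] (a : A) : (e11 a : Tri A M B).a = a := rfl
@[simp] theorem e11_m [Zero M] [Zero B] (a : A) : (e11 a : Tri A M B).m = 0 := rfl
@[simp] theorem e11_b [Zero M] [Zero B] (a : A) : (e11 a : Tri A M B).b = 0 := rfl
@[simp] theorem e12_a [Zero A] [Zero B] (m : M) : (e12 m : Tri A M B).a = 0 := rfl
@[simp] theorem e12_m [Zero A] [Zero B] (m : M) : (e12 m : Tri A M B).m = m := rfl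
@[simp] theorem e12_b [Zero A] [Zero B] (m : M) : (e12 m : Tri A M B).b = 0 := rfl
@[simp] theorem e22_a [Zero A] [Zero M] (b : B) : (e22 b : Tri A M B).a = 0 := rfl
@[simp] theorem e22_m [Zero A] [Zero M] (b : B) : (e22 b : Tri A M B).m = 0 := rfl
@[simp] theorem e22_b [Zero A] [Zero M] (b : B) : (e22 b : Tri A M B).b = b := rfl

end Tri


theorem mult_add_e22_e12
    {R A M B R' : Type*} [CommRing R]
    [NonUnitalRing A] [NonUnitalRing B] [AddCommGroup M]
    [Module R A] [Module R B] [Module R M]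
    [SMulCommClass R A A] [IsScalarTower R A A]
    [SMulCommClass R B B] [IsScalarTower R B B]
    [SMul A M] [SMul Bᵐᵒᵖ M] [TriBimodule R A M B]
    (hfaithA : ∀ a : A, (∀ m : M, a • m = 0) → a = 0)
    (hfaithB : ∀ b : B, (∀ m : M, MulOpposite.op b • m = 0) → b = 0)
    (hA₁ : ∀ a : A, (∀ x : A, a * x = 0) → a = 0)
    (hA₂ : ∀ a : A, (∀ x : A, x * a = 0) → a = 0)
    (hB₁ : ∀ b : B, (∀ y : B, b * y = 0) → b = 0)
    (hB₂ : ∀ b : B, (∀ y : B, y * b = 0) → b = 0)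
    [Ring R'] (φ : Tri A M B → R')
    (hbij : Function.Bijective φ)
    (hmul : ∀ x y : Tri A M B, φ (x * y) = φ x * φ y) :
    ∀ (b : B) (m : M), φ ((Tri.e22 b : Tri A M B) + Tri.e12 m) = φ (Tri.e22 b) + φ (Tri.e12 m) := by
  intro b m
  obtain ⟨hinj, hsurj⟩ := hbij
  -- zero-smul lemmas derived from the bimodule axioms
  have smul0A : ∀ a : A, a • (0 : M) = 0 := by
    intro a
    have h := TriBimodule.smul_add_left (R := R) (B := B) a (0 : M) 0
    rw [add_zero] at h
    have : a • (0 : M) + 0 = a • (0 : M) + a • (0 : M) := by rw [add_zero]; exact h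
    exact (add_left_cancel this).symm
  have zsmulA : ∀ mm : M, (0 : A) • mm = 0 := by
    intro mm
    have h := TriBimodule.add_smul_left (R := R) (B := B) (0 : A) 0 mm
    rw [add_zero] at h
    have : (0 : A) • mm + 0 = (0 : A) • mm + (0 : A) • mm := by rw [add_zero]; exact h
    exact (add_left_cancel this).symm
  have smul0B : ∀ bb : Bᵐᵒᵖ, bb • (0 : M) = 0 := by
    intro bb
    have h := TriBimodule.smul_add_right (R := R) (A := A) bb (0 : M) 0
    rw [add_zero] at h
    have : bb • (0 : M) + 0 = bb • (0 : M) + bb • (0 : M) := by rw [add_zero]; exact h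
    exact (add_left_cancel this).symm
  have zsmulB : ∀ mm : M, (0 : Bᵐᵒᵖ) • mm = 0 := by
    intro mm
    have h := TriBimodule.add_smul_right (R := R) (A := A) (0 : Bᵐᵒᵖ) 0 mm
    rw [add_zero] at h
    have : (0 : Bᵐᵒᵖ) • mm + 0 = (0 : Bᵐᵒᵖ) • mm + (0 : Bᵐᵒᵖ) • mm := by rw [add_zero]; exact h
    exact (add_left_cancel this).symm
  -- φ(0) = 0
  have hphi0 : φ 0 = 0 := by
    obtain ⟨z, hz⟩ := hsurj 0
    have h0 : (0 : Tri A M B) * z = 0 := by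
      ext <;> simp [zsmulA, smul0B]
    calc φ 0 = φ (0 * z) := by rw [h0]
    _ = φ 0 * φ z := hmul _ _
    _ = 0 := by rw [hz, mul_zero]
  -- the unit of T obtained from 1 ∈ R'
  obtain ⟨u, hu⟩ := hsurj 1
  have hul : ∀ x : Tri A M B, u * x = x := fun x =>
    hinj (by rw [hmul, hu, one_mul])
  have hur : ∀ x : Tri A M B, x * u = x := fun x =>
    hinj (by rw [hmul, hu, mul_one])
  -- u.a acts as identity on M
  have hea : ∀ mm : M, u.a • mm = mm := by
    intro mm
    have h := congrArg Tri.m (hul (Tri.e12 mm))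
    simpa [zsmulB] using h
  -- the preimage of φ(e22 b) + φ(e12 m)
  obtain ⟨c, hc⟩ := hsurj (φ (Tri.e22 b) + φ (Tri.e12 m))
  -- c.a = 0
  have h1 : c * Tri.e11 u.a = 0 := by
    apply hinj
    have e1 : (Tri.e22 b : Tri A M B) * Tri.e11 u.a = 0 := by ext <;> simp [smul0A, smul0B, zsmulA, zsmulB]
    have e2 : (Tri.e12 m : Tri A M B) * Tri.e11 u.a = 0 := by ext <;> simp [smul0A, smul0B, zsmulA, zsmulB]
    rw [hmul, hc, add_mul, ← hmul, ← hmul, e1, e2, hphi0, add_zero]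
  have hca : c.a = 0 := by
    have h := congrArg Tri.a h1
    simp at h
    have h' := congrArg Tri.a (hur c)
    simp at h'
    rw [h'] at h
    exact h
  -- c.b = b
  have h2 : Tri.e22 u.b * c = Tri.e22 (u.b * b) := by
    apply hinj
    have e1 : (Tri.e22 u.b : Tri A M B) * Tri.e22 b = Tri.e22 (u.b * b) := by
      ext <;> simp [smul0A, smul0B, zsmulA, zsmulB]
    have e2 : (Tri.e22 u.b : Tri A M B) * Tri.e12 m = 0 := by ext <;> simp [smul0A, smul0B, zsmulA, zsmulB]
    rw [hmul, hc, mul_add, ← hmul, ← hmul, e1, e2, hphi0, add_zero]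
  have hcb : c.b = b := by
    have h := congrArg Tri.b h2
    simp at h
    have h' := congrArg Tri.b (hul c)
    simp at h'
    have h'' := congrArg Tri.b (hul (Tri.e22 b))
    simp at h''
    rw [h'] at h
    rw [h''] at h
    exact h
  -- c.m = m
  have h3 : Tri.e11 u.a * c = Tri.e12 m := by
    apply hinj
    have e1 : (Tri.e11 u.a : Tri A M B) * Tri.e22 b = 0 := by ext <;> simp [smul0A, smul0B, zsmulA, zsmulB]
    have e2 : (Tri.e11 u.a : Tri A M B) * Tri.e12 m = Tri.e12 m := by
      ext <;> simp [smul0A, smul0B, zsmulA, zsmulB, hea]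
    rw [hmul, hc, mul_add, ← hmul, ← hmul, e1, e2, hphi0, zero_add]
  have hcm : c.m = m := by
    have h := congrArg Tri.m h3
    simp [smul0B, hea] at h
    exact h
  -- conclude
  have hce : c = Tri.e22 b + Tri.e12 m := by
    ext <;> simp [hca, hcb, hcm]
  rw [hce] at hc
  exact hc
end
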